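/- arXiv:2605.19095 — 3 statements merged into one kernel-verified Lean document; each statement's English description precedes it below -/
import Mathlib

section
/- For a fixed sequence of nonnegative values g_1, ..., g_T (representing squared gradient norms) with each g_t > 0, and a fixed constant D > 0, the quantity (D² + Σ_{t=1}^T γ_t² g_t) / (2 Σ_{t=1}^T γ_t) over positive weights γ_1, ..., γ_T is minimized when γ_t is proportional to 1/g_t (i.e., inverse to the squared gradient norm). -/
open Finset

/-- Optimal weighting theorem: `F γ = (D² + Σ γ_t² g_t)/(2 Σ γ_t)` over positive weights is
minimized by `γ_t ∝ 1/g_t`, attaining the value `D / sqrt (Σ 1/g_t)`. -/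
theorem optimal_inverse_gradient_weights
    (T : ℕ) (hT : 0 < T) (g : Fin T → ℝ) (hg : ∀ t, 0 < g t) (D : ℝ) (hD : 0 < D) :
    let F : (Fin T → ℝ) → ℝ :=
      fun γ => (D ^ 2 + ∑ t, (γ t) ^ 2 * g t) / (2 * ∑ t, γ t)
    let γstar : Fin T → ℝ := fun t => D / (g t * Real.sqrt (∑ i, 1 / g i))
    (∀ t, 0 < γstar t) ∧
    F γstar = D / Real.sqrt (∑ t, 1 / g t) ∧
    ∀ γ : Fin T → ℝ, (∀ t, 0 < γ t) → F γstar ≤ F γ := by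
  intro F γstar
  have hne : (univ : Finset (Fin T)).Nonempty := ⟨⟨0, hT⟩, mem_univ _⟩
  have hS : 0 < ∑ i, 1 / g i :=
    Finset.sum_pos (fun i _ => by have := hg i; positivity) hne
  set S := ∑ i, 1 / g i with hSdef
  set s := Real.sqrt S with hsdef
  have hs : 0 < s := Real.sqrt_pos.mpr hS
  have hS2 : S = s ^ 2 := (Real.sq_sqrt hS.le).symm
  have hpos : ∀ t, 0 < γstar t := fun t => by
    have := hg t; simp only [γstar]; positivity
  have hsum1 : ∑ t, (γstar t) ^ 2 * g t = D ^ 2 := by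
    have h1 : ∀ t ∈ univ, (γstar t) ^ 2 * g t = D ^ 2 / s ^ 2 * (1 / g t) := by
      intro t _
      have hgt := (hg t).ne'
      simp only [γstar, ← hSdef, ← hsdef]
      field_simp
    rw [Finset.sum_congr rfl h1, ← Finset.mul_sum, ← hSdef, hS2]
    field_simp
  have hsum2 : ∑ t, γstar t = D * s := by
    have h1 : ∀ t ∈ univ, γstar t = D / s * (1 / g t) := by
      intro t _
      have hgt := (hg t).ne'
      simp only [γstar, ← hSdef, ← hsdef]
      field_simp
    rw [Finset.sum_congr rfl h1, ← Finset.mul_sum, ← hSdef, hS2]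
    field_simp
  have hF : F γstar = D / s := by
    simp only [F, hsum1, hsum2]
    rw [div_eq_div_iff (by positivity) hs.ne']
    ring
  refine ⟨hpos, hF, ?_⟩
  intro γ hγ
  have hB : 0 < ∑ t, γ t := Finset.sum_pos (fun t _ => hγ t) hne
  have key : ∀ t ∈ univ, 2 * (D / s) * γ t ≤ (γ t) ^ 2 * g t + D ^ 2 / s ^ 2 * (1 / g t) := by
    intro t _
    have hgt := hg t
    rw [← sub_nonneg]
    have e : (γ t) ^ 2 * g t + D ^ 2 / s ^ 2 * (1 / g t) - 2 * (D / s) * γ t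
        = (γ t * g t * s - D) ^ 2 / (g t * s ^ 2) := by
      field_simp
      ring
    rw [e]
    positivity
  have hsumkey := Finset.sum_le_sum key
  rw [← Finset.mul_sum] at hsumkey
  have hrhs : ∑ t, ((γ t) ^ 2 * g t + D ^ 2 / s ^ 2 * (1 / g t))
      = (∑ t, (γ t) ^ 2 * g t) + D ^ 2 := by
    rw [Finset.sum_add_distrib, ← Finset.mul_sum, ← hSdef, hS2]
    field_simp
  rw [hrhs] at hsumkey
  rw [hF]
  simp only [F]
  rw [div_le_div_iff₀ hs (by positivity)]
  have h2 : 2 * (D / s) * (∑ t, γ t) * s = 2 * D * (∑ t, γ t) := by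
    field_simp
  nlinarith [mul_le_mul_of_nonneg_right hsumkey hs.le]
end

section
/- Consider the scalar steady-state dynamics induced by SGD with weight decay on a scale-invariant loss: if the squared weight norm satisfies the fixed-point condition that the growth from the orthogonal gradient step balances the shrinkage from decay, i.e., ‖w‖² = (1 - γλ)²‖w‖² + γ²‖g‖² to first order in γ, then at the steady state ‖g‖/‖w‖ = sqrt(2λ/γ) + O(γ). -/
theorem norm_smul_sub_smul_sq_of_inner_eq_zero {E : Type*} [SeminormedAddCommGroup E]
    [InnerProductSpace ℝ E] {w g : E} (h : inner ℝ g w = (0 : ℝ)) (a b : ℝ) :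
    ‖a • w - b • g‖ ^ 2 = a ^ 2 * ‖w‖ ^ 2 + b ^ 2 * ‖g‖ ^ 2 := by
  rw [norm_sub_sq_real, real_inner_smul_left, real_inner_smul_right, real_inner_comm, h,
    norm_smul, norm_smul, mul_pow, mul_pow, Real.norm_eq_abs, Real.norm_eq_abs, sq_abs, sq_abs]
  ring

theorem one_sub_mul_sq_mul_add_sq_mul_eq_iff {W G γ lam : ℝ} (hW : W ≠ 0) (hγ : γ ≠ 0) :
    (1 - γ * lam) ^ 2 * W + γ ^ 2 * G = W ↔ G / W = 2 * lam / γ - lam ^ 2 := by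
  have hcoeff : γ ^ 2 * (2 * lam / γ - lam ^ 2) = 1 - (1 - γ * lam) ^ 2 := by
    field_simp
    ring
  rw [div_eq_iff hW]
  constructor
  · intro h
    apply mul_left_cancel₀ (pow_ne_zero 2 hγ)
    linear_combination h - W * hcoeff
  · intro h
    linear_combination γ ^ 2 * h + W * hcoeff

theorem steady_state_grad_weight_ratio_general
    {d : ℕ} (w g : EuclideanSpace ℝ (Fin d)) (hw : w ≠ 0)
    (horth : inner ℝ g w = (0 : ℝ))
    (γ lam : ℝ) (hγ : 0 < γ) :
    ‖(1 - γ * lam) • w - γ • g‖ = ‖w‖ ↔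
      ‖g‖ ^ 2 / ‖w‖ ^ 2 = 2 * lam / γ - lam ^ 2 := by
  rw [← sq_eq_sq₀ (norm_nonneg _) (norm_nonneg _),
    norm_smul_sub_smul_sq_of_inner_eq_zero horth]
  exact one_sub_mul_sq_mul_add_sq_mul_eq_iff (pow_ne_zero 2 (norm_ne_zero_iff.mpr hw)) hγ.ne'

/-- Exact steady state for SGD with weight decay on a scale-invariant loss:
with `w⁺ = (1-γλ)w - γg`, `⟨g,w⟩ = 0`, the fixed-point condition `‖w⁺‖ = ‖w‖` holds iff
`‖g‖²/‖w‖² = (1-(1-γλ)²)/γ² = 2λ/γ - λ²`. -/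
theorem steady_state_grad_weight_ratio
    {d : ℕ} (w g : EuclideanSpace ℝ (Fin d)) (hw : w ≠ 0)
    (horth : inner ℝ g w = (0 : ℝ))
    (γ lam : ℝ) (hγ : 0 < γ) (hlam : 0 < lam) (hgl : γ * lam < 1) :
    ‖(1 - γ * lam) • w - γ • g‖ = ‖w‖ ↔
      ‖g‖ ^ 2 / ‖w‖ ^ 2 = 2 * lam / γ - lam ^ 2 :=
  steady_state_grad_weight_ratio_general w g hw horth γ lam hγ
end

section
/- For a convex differentiable function f with minimum value f_⋆ attained at x_⋆, one step of gradient descent with the Polyak step size γ = (f(x) - f_⋆)/‖∇f(x)‖² satisfies ‖x - γ∇f(x) - x_⋆‖² ≤ ‖x - x_⋆‖² - (f(x) - f_⋆)²/‖∇f(x)‖². -/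
/-!
Restricting `f` to the segment from `x` to `x⋆` and using the one-variable slope inequality gives
the first-order condition `f x - f⋆ ≤ ⟪∇f x, x - x⋆⟫`. Expanding the square, the new distance is
at most `‖x - x⋆‖² - 2γ (f x - f⋆) + γ² ‖∇f x‖²`, a quadratic in `γ` whose minimum, attained at
the Polyak step, is `‖x - x⋆‖² - (f x - f⋆)² / ‖∇f x‖²`.
-/

open AffineMap InnerProductSpace

theorem ConvexOn.add_apply_sub_le_of_hasFDerivAt {E : Type*} [NormedAddCommGroup E]
    [NormedSpace ℝ E] {s : Set E} {f : E → ℝ} {f' : E →L[ℝ] ℝ} {x y : E}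
    (hf : ConvexOn ℝ s f) (hx : x ∈ s) (hy : y ∈ s) (hf' : HasFDerivAt f f' x) :
    f x + f' (y - x) ≤ f y := by
  have hline : ConvexOn ℝ (lineMap x y ⁻¹' s) (f ∘ lineMap x y) := hf.comp_affineMap _
  have hslope : f' (y - x) ≤ slope (f ∘ lineMap x y) (0 : ℝ) 1 :=
    hline.le_slope_of_hasDerivAt (by simpa using hx) (by simpa using hy) zero_lt_one
      (hf'.comp_hasDerivAt_of_eq 0 hasDerivAt_lineMap (lineMap_apply_zero x y).symm)
  rw [slope_def_field] at hslope
  simp only [Function.comp_apply, lineMap_apply_one, lineMap_apply_zero, sub_zero,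
    div_one] at hslope
  linarith

theorem ConvexOn.sub_le_inner_gradient {F : Type*} [NormedAddCommGroup F]
    [InnerProductSpace ℝ F] [CompleteSpace F] {s : Set F} {f : F → ℝ} {x y : F}
    (hf : ConvexOn ℝ s f) (hx : x ∈ s) (hy : y ∈ s) (hdiff : DifferentiableAt ℝ f x) :
    f x - f y ≤ inner ℝ (gradient f x) (x - y) := by
  have hfirst := hf.add_apply_sub_le_of_hasFDerivAt hx hy
    (hasGradientAt_iff_hasFDerivAt.mp hdiff.hasGradientAt)
  rw [toDual_apply_apply, ← neg_sub x y, inner_neg_right] at hfirst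
  linarith

theorem norm_sub_div_smul_sq_le_of_le_inner {F : Type*} [NormedAddCommGroup F]
    [InnerProductSpace ℝ F] {g v : F} {Δ : ℝ} (hΔ : 0 ≤ Δ) (hinner : Δ ≤ inner ℝ g v) :
    ‖v - (Δ / ‖g‖ ^ 2) • g‖ ^ 2 ≤ ‖v‖ ^ 2 - Δ ^ 2 / ‖g‖ ^ 2 := by
  set γ := Δ / ‖g‖ ^ 2
  have hγ : 0 ≤ γ := by positivity
  have hsq : Δ ^ 2 / ‖g‖ ^ 2 = γ * Δ := by ring
  -- for `g = 0` this holds with the junk value `γ = Δ / 0 = 0`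
  have hstep : γ ^ 2 * ‖g‖ ^ 2 = γ * Δ := by
    rcases eq_or_ne ‖g‖ 0 with hg | hg
    · simp [γ, hg]
    · rw [sq γ, mul_assoc, div_mul_cancel₀ Δ (pow_ne_zero 2 hg)]
  calc ‖v - γ • g‖ ^ 2 = ‖v‖ ^ 2 - 2 * γ * inner ℝ g v + γ * Δ := by
        rw [norm_sub_sq_real, real_inner_smul_right, real_inner_comm, norm_smul,
          Real.norm_of_nonneg hγ, mul_pow, hstep]
        ring
    _ ≤ ‖v‖ ^ 2 - 2 * γ * Δ + γ * Δ := by gcongr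
    _ = ‖v‖ ^ 2 - Δ ^ 2 / ‖g‖ ^ 2 := by
        rw [hsq]
        ring

theorem polyak_step_guarantee_general
    {d : ℕ} (f : EuclideanSpace ℝ (Fin d) → ℝ)
    (hconv : ConvexOn ℝ Set.univ f) (hf : Differentiable ℝ f)
    (xstar : EuclideanSpace ℝ (Fin d)) (hmin : ∀ y, f xstar ≤ f y)
    (x : EuclideanSpace ℝ (Fin d)) :
    let γ := (f x - f xstar) / ‖gradient f x‖ ^ 2
    ‖x - γ • gradient f x - xstar‖ ^ 2 ≤
      ‖x - xstar‖ ^ 2 - (f x - f xstar) ^ 2 / ‖gradient f x‖ ^ 2 := by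
  intro γ
  rw [sub_right_comm]
  exact norm_sub_div_smul_sq_le_of_le_inner (sub_nonneg.mpr (hmin x))
    (hconv.sub_le_inner_gradient (Set.mem_univ x) (Set.mem_univ xstar) (hf x))

/-- Polyak step size guarantee: for convex differentiable `f` with minimizer `x⋆`,
one gradient step with `γ = (f(x)-f⋆)/‖∇f(x)‖²` contracts the squared distance by
`(f(x)-f⋆)²/‖∇f(x)‖²`. -/
theorem polyak_step_guarantee
    {d : ℕ} (f : EuclideanSpace ℝ (Fin d) → ℝ)
    (hconv : ConvexOn ℝ Set.univ f) (hf : Differentiable ℝ f)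
    (xstar : EuclideanSpace ℝ (Fin d)) (hmin : ∀ y, f xstar ≤ f y)
    (x : EuclideanSpace ℝ (Fin d)) (hgrad : gradient f x ≠ 0) :
    let γ := (f x - f xstar) / ‖gradient f x‖ ^ 2
    ‖x - γ • gradient f x - xstar‖ ^ 2 ≤
      ‖x - xstar‖ ^ 2 - (f x - f xstar) ^ 2 / ‖gradient f x‖ ^ 2 :=
  polyak_step_guarantee_general f hconv hf xstar hmin x
end
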